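/- Fix real constants κ, e, a real b ≠ 0, a sign ε ∈ {1, −1}, and an integer m ≥ 2. Let I ⊆ ℝ be a nonempty open interval with 0 ∉ I, and let φ : I → ℝ be twice differentiable and satisfy at every τ ∈ I both (F1): τ⁴φ″ + [(2−m)τ³ + bτ²]φ′ − mτ²φ = −εκτ²/2 and (F2): −τ⁴φ″ + [(m−1)τ³ − bτ²]φ′ + bτφ = eτ. Then there exist real constants A, B, C such that φ(τ) = A + B·Σ_{l=1}^{m} (b^{m−l}/(m−l)!)·τ^l + C·τ^m·exp(b/τ) for all τ ∈ I. -/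

import Mathlib

/-!
Adding (F1) and (F2) eliminates `φ''` and, after division by `τ ≠ 0`, leaves the first-order
linear equation `τ² φ' + (b - m τ) φ = e - (εκ/2) τ`. A constant plus a multiple of the polynomial
`expTaylorPoly b m` is a particular solution, and `τ ^ m * exp (b / τ)` is a nowhere vanishing
solution of the homogeneous equation `y' = (m τ - b) / τ² · y`; on an interval any other solution
of that equation is a constant multiple of it, since the quotient has zero derivative.
-/

open Finset Real

/-- `τ ^ m` times the degree `m - 1` Taylor polynomial of `exp` at `b / τ`. -/
noncomputable def expTaylorPoly (b : ℝ) (m : ℕ) (τ : ℝ) : ℝ :=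
  ∑ l ∈ Icc 1 m, b ^ (m - l) / ((m - l).factorial : ℝ) * τ ^ l

lemma expTaylorPoly_zero (b : ℝ) : expTaylorPoly b 0 = 0 := by
  ext τ
  simp [expTaylorPoly]

lemma expTaylorPoly_succ (b : ℝ) (m : ℕ) (τ : ℝ) :
    expTaylorPoly b (m + 1) τ = τ * (expTaylorPoly b m τ + b ^ m / m.factorial) := by
  rw [expTaylorPoly, expTaylorPoly, ← Ico_add_one_right_eq_Icc, ← Ico_add_one_right_eq_Icc,
    sum_Ico_eq_sum_range, sum_Ico_eq_sum_range, Nat.add_sub_cancel, Nat.add_sub_cancel,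
    sum_range_succ', mul_add, mul_sum]
  congr 1
  · refine sum_congr rfl fun k _ => ?_
    rw [show m + 1 - (1 + (k + 1)) = m - (1 + k) by omega]
    ring
  · simp only [add_zero, Nat.add_sub_cancel, pow_one]
    ring

lemma differentiable_expTaylorPoly (b : ℝ) (m : ℕ) : Differentiable ℝ (expTaylorPoly b m) := by
  unfold expTaylorPoly
  fun_prop

lemma expTaylorPoly_ode (b : ℝ) (m : ℕ) (τ : ℝ) :
    τ ^ 2 * deriv (expTaylorPoly b m) τ + (b - m * τ) * expTaylorPoly b m τ
      = m * b ^ m / m.factorial * τ := by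
  induction m with
  | zero => simp [expTaylorPoly_zero]
  | succ m ih =>
    have hderiv : HasDerivAt (expTaylorPoly b (m + 1))
        (1 * (expTaylorPoly b m τ + b ^ m / m.factorial) + τ * deriv (expTaylorPoly b m) τ) τ := by
      rw [funext (expTaylorPoly_succ b m)]
      exact (hasDerivAt_id τ).mul ((differentiable_expTaylorPoly b m τ).hasDerivAt.add_const _)
    have hfac : ((m + 1 : ℕ) : ℝ) / (m + 1).factorial = 1 / m.factorial := by
      rw [Nat.factorial_succ]
      push_cast
      field_simp
    rw [hderiv.deriv, expTaylorPoly_succ, mul_div_right_comm, hfac]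
    push_cast
    linear_combination τ * ih

lemma hasDerivAt_pow_mul_exp_div (b : ℝ) (m : ℕ) {τ : ℝ} (hτ : τ ≠ 0) :
    HasDerivAt (fun x => x ^ m * exp (b / x)) ((m * τ - b) / τ ^ 2 * (τ ^ m * exp (b / τ))) τ := by
  have h := (hasDerivAt_pow m τ).fun_mul ((hasDerivAt_inv hτ).const_mul b).exp
  simp only [← div_eq_mul_inv] at h
  refine h.congr_deriv ?_
  rcases m with _ | m
  · field_simp
    ring
  · rw [Nat.add_sub_cancel]
    field_simp
    push_cast
    ring

lemma Set.OrdConnected.exists_eq_const_of_hasDerivAt_zero {s : Set ℝ} (hs : s.OrdConnected)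
    {f : ℝ → ℝ} (hf : ∀ x ∈ s, HasDerivAt f 0 x) : ∃ c, ∀ x ∈ s, f x = c := by
  rcases s.eq_empty_or_nonempty with rfl | ⟨x₀, hx₀⟩
  · simp
  refine ⟨f x₀, fun x hx => ?_⟩
  have h := hs.convex.norm_image_sub_le_of_norm_hasDerivWithin_le (C := 0)
    (fun y hy => (hf y hy).hasDerivWithinAt) (fun _ _ => by simp) hx₀ hx
  rwa [zero_mul, norm_le_zero_iff, sub_eq_zero] at h

lemma Set.OrdConnected.exists_eq_const_mul_of_hasDerivAt {s : Set ℝ} (hs : s.OrdConnected)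
    {a f g : ℝ → ℝ} (hf : ∀ x ∈ s, HasDerivAt f (a x * f x) x)
    (hg : ∀ x ∈ s, HasDerivAt g (a x * g x) x) (hg0 : ∀ x ∈ s, g x ≠ 0) :
    ∃ c, ∀ x ∈ s, f x = c * g x := by
  obtain ⟨c, hc⟩ := hs.exists_eq_const_of_hasDerivAt_zero (f := fun x => f x / g x)
    fun x hx => ((hf x hx).div (hg x hx) (hg0 x hx)).congr_deriv (by ring)
  exact ⟨c, fun x hx => by rw [← hc x hx, div_mul_cancel₀ _ (hg0 x hx)]⟩

lemma Set.OrdConnected.exists_eq_add_expTaylorPoly_of_ode {s : Set ℝ} (hs : s.OrdConnected) (hs0 : (0 : ℝ) ∉ s)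
    {b : ℝ} (hb : b ≠ 0) {m : ℕ} (hm : m ≠ 0) (e c : ℝ) {y : ℝ → ℝ}
    (hy : ∀ τ ∈ s, DifferentiableAt ℝ y τ)
    (hode : ∀ τ ∈ s, τ ^ 2 * deriv y τ + (b - m * τ) * y τ = e - c * τ) :
    ∃ A B C : ℝ, ∀ τ ∈ s, y τ = A + B * expTaylorPoly b m τ + C * (τ ^ m * exp (b / τ)) := by
  have hτ0 : ∀ τ ∈ s, τ ≠ 0 := fun τ hτ h => hs0 (h ▸ hτ)
  obtain ⟨A, hA⟩ : ∃ A, b * A = e := ⟨e / b, mul_div_cancel₀ e hb⟩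
  obtain ⟨B, hB⟩ : ∃ B, B * (m * b ^ m / m.factorial) = m * A - c :=
    ⟨_, div_mul_cancel₀ _ (by positivity)⟩
  have hhom : ∀ τ ∈ s, HasDerivAt (fun τ => y τ - A - B * expTaylorPoly b m τ)
      ((m * τ - b) / τ ^ 2 * (y τ - A - B * expTaylorPoly b m τ)) τ := by
    intro τ hτ
    refine (((hy τ hτ).hasDerivAt.sub_const A).sub
      ((differentiable_expTaylorPoly b m τ).hasDerivAt.const_mul B)).congr_deriv ?_
    have := hτ0 τ hτ
    field_simp
    linear_combination hode τ hτ - B * expTaylorPoly_ode b m τ - τ * hB - hA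
  obtain ⟨C, hC⟩ := hs.exists_eq_const_mul_of_hasDerivAt hhom
    (fun τ hτ => hasDerivAt_pow_mul_exp_div b m (hτ0 τ hτ))
    fun τ hτ => mul_ne_zero (pow_ne_zero m (hτ0 τ hτ)) (exp_ne_zero _)
  exact ⟨A, B, C, fun τ hτ => by linear_combination hC τ hτ⟩

theorem stmt_18_general (κ e b : ℝ) (hb : b ≠ 0)
    (ε : ℝ)
    (m : ℕ) (hm : 2 ≤ m)
    (I : Set ℝ) (hIconn : I.OrdConnected)
    (h0 : (0:ℝ) ∉ I)
    (φ : ℝ → ℝ)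
    (hφ : ∀ τ ∈ I, DifferentiableAt ℝ φ τ)
    (hF1 : ∀ τ ∈ I,
      τ^4 * deriv (deriv φ) τ + ((2-(m:ℝ))*τ^3 + b*τ^2) * deriv φ τ
        - (m:ℝ)*τ^2 * φ τ = -ε*κ*τ^2/2)
    (hF2 : ∀ τ ∈ I,
      -τ^4 * deriv (deriv φ) τ + (((m:ℝ)-1)*τ^3 - b*τ^2) * deriv φ τ
        + b*τ * φ τ = e*τ) :
    ∃ A B C : ℝ, ∀ τ ∈ I,
      φ τ = A + B * ∑ l ∈ Finset.Icc 1 m, b^(m-l) / ((m-l).factorial : ℝ) * τ^l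
        + C * (τ^m * Real.exp (b/τ)) := by
  have hode : ∀ τ ∈ I, τ ^ 2 * deriv φ τ + (b - m * τ) * φ τ = e - ε * κ / 2 * τ := by
    intro τ hτ
    have hτ0 : τ ≠ 0 := fun h => h0 (h ▸ hτ)
    refine mul_left_cancel₀ hτ0 ?_
    linear_combination hF1 τ hτ + hF2 τ hτ
  exact hIconn.exists_eq_add_expTaylorPoly_of_ode h0 hb (by omega) e (ε * κ / 2) hφ hode

/-- The general solution (4.16) of the system {(F1),(F2)} on a
nonempty open interval avoiding `0`. -/
theorem stmt_18 (κ e b : ℝ) (hb : b ≠ 0)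
    (ε : ℝ) (hε : ε = 1 ∨ ε = -1)
    (m : ℕ) (hm : 2 ≤ m)
    (I : Set ℝ) (hIopen : IsOpen I) (hIne : I.Nonempty) (hIconn : I.OrdConnected)
    (h0 : (0:ℝ) ∉ I)
    (φ : ℝ → ℝ)
    (hφ : ∀ τ ∈ I, DifferentiableAt ℝ φ τ)
    (hφ' : ∀ τ ∈ I, DifferentiableAt ℝ (deriv φ) τ)
    (hF1 : ∀ τ ∈ I,
      τ^4 * deriv (deriv φ) τ + ((2-(m:ℝ))*τ^3 + b*τ^2) * deriv φ τ
        - (m:ℝ)*τ^2 * φ τ = -ε*κ*τ^2/2)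
    (hF2 : ∀ τ ∈ I,
      -τ^4 * deriv (deriv φ) τ + (((m:ℝ)-1)*τ^3 - b*τ^2) * deriv φ τ
        + b*τ * φ τ = e*τ) :
    ∃ A B C : ℝ, ∀ τ ∈ I,
      φ τ = A + B * ∑ l ∈ Finset.Icc 1 m, b^(m-l) / ((m-l).factorial : ℝ) * τ^l
        + C * (τ^m * Real.exp (b/τ)) :=
  stmt_18_general κ e b hb ε m hm I hIconn h0 φ hφ hF1 hF2
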